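/- Consider a portfolio of n stocks under the drawdown-modulated feedback controller I_i(k) = γ_i·M(k)·V(k) for i = 1, …, n, where the constant gain vector γ ∈ ℝⁿ satisfies ⟨|X_min|, γ⁺⟩ − ⟨X_max, γ⁻⟩ ≤ 1 and M(k) = (d_max − d(k))/(1 − d(k)). If every realized return vector satisfies X_min,i ≤ X_i(k) ≤ X_max,i for all i, then for all stages k = 0, 1, …, N the drawdown satisfies d(k) ≤ d_max and V(k) > 0. -/

import Mathlib

/-- Running maximum `V_max(k) = max_{0 ≤ i ≤ k} V(i)` of the account value. -/
noncomputable def runMax (V : ℕ → ℝ) (k : ℕ) : ℝ :=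
  (Finset.range (k + 1)).sup' Finset.nonempty_range_add_one V

/-- Percentage drawdown `d(k) = (V_max(k) - V(k)) / V_max(k)`. -/
noncomputable def drawdown (V : ℕ → ℝ) (k : ℕ) : ℝ :=
  (runMax V k - V k) / runMax V k

/-!
Write `m = V_max(k)` and `d = d(k)`, so that `V(k) = (1 - d) m` and `M(k) V(k) = (d_max - d) m`.
The gain condition makes the per-unit return `S = ⟨γ, X(k)⟩` at least `-1`, and `M(k) ≥ 0` while
`d ≤ d_max`, hence
`V(k+1) = V(k) + M(k) V(k) S ≥ V(k) - M(k) V(k) = (1 - d) m - (d_max - d) m = (1 - d_max) m > 0`.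
Since `V_max(k+1) = max (V(k+1), m)`, this lower bound is exactly `d(k+1) ≤ d_max`, and the
invariant propagates by induction.
-/

theorem min_mul_sub_abs_mul_max_le_mul {a b g x : ℝ} (hax : a ≤ x) (hxb : x ≤ b) :
    b * min g 0 - |a| * max g 0 ≤ g * x := by
  rcases le_total 0 g with hg | hg
  · rw [min_eq_right hg, max_eq_left hg]
    nlinarith [neg_abs_le a]
  · rw [min_eq_left hg, max_eq_right hg]
    nlinarith

theorem sum_min_mul_sub_sum_abs_mul_max_le_sum_mul {ι : Type*} [Fintype ι]
    {xmin xmax γ x : ι → ℝ} (hx : ∀ i, xmin i ≤ x i ∧ x i ≤ xmax i) :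
    ∑ i, xmax i * min (γ i) 0 - ∑ i, |xmin i| * max (γ i) 0 ≤ ∑ i, γ i * x i := by
  rw [← Finset.sum_sub_distrib]
  exact Finset.sum_le_sum fun i _ => min_mul_sub_abs_mul_max_le_mul (hx i).1 (hx i).2

noncomputable def modulator (dmax d : ℝ) : ℝ :=
  (dmax - d) / (1 - d)

theorem modulator_nonneg {d dmax : ℝ} (hd : d ≤ dmax) (hd1 : d < 1) :
    0 ≤ modulator dmax d :=
  div_nonneg (by linarith) (by linarith)

section Drawdown

variable (V : ℕ → ℝ) {k : ℕ}

theorem runMax_zero : runMax V 0 = V 0 := by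
  simp [runMax]

theorem runMax_succ (k : ℕ) : runMax V (k + 1) = max (V (k + 1)) (runMax V k) := by
  rw [runMax, runMax, ← Finset.sup'_insert]
  congr 1
  exact Finset.range_add_one

theorem self_le_runMax (k : ℕ) : V k ≤ runMax V k :=
  Finset.le_sup' V (Finset.self_mem_range_succ k)

theorem drawdown_zero : drawdown V 0 = 0 := by
  simp [drawdown, runMax_zero]

theorem drawdown_mul_runMax (hV : 0 < V k) : drawdown V k * runMax V k = runMax V k - V k :=
  div_mul_cancel₀ _ (hV.trans_le (self_le_runMax V k)).ne'

theorem drawdown_le_iff {c : ℝ} (hV : 0 < V k) :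
    drawdown V k ≤ c ↔ (1 - c) * runMax V k ≤ V k := by
  rw [drawdown, div_le_iff₀ (hV.trans_le (self_le_runMax V k))]
  constructor <;> intro h <;> linarith

theorem drawdown_lt_one (hV : 0 < V k) : drawdown V k < 1 := by
  rw [drawdown, div_lt_one (hV.trans_le (self_le_runMax V k))]
  linarith

theorem drawdown_succ_le {c : ℝ} (hc0 : 0 ≤ c) (hc1 : c < 1) (hV : 0 < V k)
    (hnext : (1 - c) * runMax V k ≤ V (k + 1)) : drawdown V (k + 1) ≤ c ∧ 0 < V (k + 1) := by
  have hpos : 0 < V (k + 1) :=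
    lt_of_lt_of_le (mul_pos (by linarith) (hV.trans_le (self_le_runMax V k))) hnext
  refine ⟨?_, hpos⟩
  rw [drawdown_le_iff V hpos, runMax_succ, mul_max_of_nonneg _ _ (by linarith)]
  exact max_le (by nlinarith) hnext

theorem modulator_mul_self (dmax : ℝ) (hV : 0 < V k) :
    modulator dmax (drawdown V k) * V k = (dmax - drawdown V k) * runMax V k := by
  have h1d : (1 - drawdown V k) * runMax V k = V k := by linarith [drawdown_mul_runMax V hV]
  rw [modulator, ← h1d, div_mul_eq_mul_div, mul_div_assoc, mul_div_cancel_left₀]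
  exact (sub_pos.2 (drawdown_lt_one V hV)).ne'

theorem one_sub_mul_runMax_le_succ {dmax S : ℝ} (hV : 0 < V k) (hd : drawdown V k ≤ dmax)
    (hS : -1 ≤ S) (hnext : V (k + 1) = V k + modulator dmax (drawdown V k) * V k * S) :
    (1 - dmax) * runMax V k ≤ V (k + 1) := by
  have hMV : 0 ≤ modulator dmax (drawdown V k) * V k :=
    mul_nonneg (modulator_nonneg hd (drawdown_lt_one V hV)) hV.le
  calc (1 - dmax) * runMax V k = V k - modulator dmax (drawdown V k) * V k := by
        rw [modulator_mul_self V dmax hV]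
        linarith [drawdown_mul_runMax V hV]
    _ ≤ V k + modulator dmax (drawdown V k) * V k * S := by nlinarith
    _ = V (k + 1) := hnext.symm

end Drawdown

theorem portfolio_drawdown_modulated_feedback_control_general
    (n N : ℕ) (Xmin Xmax : Fin n → ℝ) (dmax : ℝ) (γ : Fin n → ℝ)
    (hdmax0 : 0 < dmax) (hdmax1 : dmax < 1)
    (hγ : (∑ i, |Xmin i| * max (γ i) 0) - (∑ i, Xmax i * min (γ i) 0) ≤ 1)
    (V : ℕ → ℝ) (I X : ℕ → Fin n → ℝ)
    (hV0 : 0 < V 0)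
    (hrec : ∀ k, V (k + 1) = V k + ∑ i, I k i * X k i)
    (hctrl : ∀ k i, I k i = γ i * ((dmax - drawdown V k) / (1 - drawdown V k)) * V k)
    (hX : ∀ k i, Xmin i ≤ X k i ∧ X k i ≤ Xmax i) :
    ∀ k ≤ N, drawdown V k ≤ dmax ∧ 0 < V k := by
  have hnext : ∀ k, V (k + 1) = V k + modulator dmax (drawdown V k) * V k * ∑ i, γ i * X k i := by
    intro k
    simp only [hrec k, hctrl k, modulator, Finset.mul_sum]
    congr 1
    exact Finset.sum_congr rfl fun i _ => by ring
  have hS : ∀ k, -1 ≤ ∑ i, γ i * X k i := fun k => by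
    linarith [sum_min_mul_sub_sum_abs_mul_max_le_sum_mul (γ := γ) (hX k)]
  suffices ∀ k, drawdown V k ≤ dmax ∧ 0 < V k from fun k _ => this k
  intro k
  induction k with
  | zero => exact ⟨(drawdown_zero V).trans_le hdmax0.le, hV0⟩
  | succ k ih =>
    exact drawdown_succ_le V hdmax0.le hdmax1 ih.2
      (one_sub_mul_runMax_le_succ V ih.2 ih.1 (hS k) (hnext k))

theorem portfolio_drawdown_modulated_feedback_control
    (n N : ℕ) (Xmin Xmax : Fin n → ℝ) (dmax : ℝ) (γ : Fin n → ℝ)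
    (hb : ∀ i, -1 < Xmin i ∧ Xmin i < 0 ∧ 0 < Xmax i)
    (hdmax0 : 0 < dmax) (hdmax1 : dmax < 1)
    (hγ : (∑ i, |Xmin i| * max (γ i) 0) - (∑ i, Xmax i * min (γ i) 0) ≤ 1)
    (V : ℕ → ℝ) (I X : ℕ → Fin n → ℝ)
    (hV0 : 0 < V 0)
    (hrec : ∀ k, V (k + 1) = V k + ∑ i, I k i * X k i)
    (hctrl : ∀ k i, I k i = γ i * ((dmax - drawdown V k) / (1 - drawdown V k)) * V k)
    (hX : ∀ k i, Xmin i ≤ X k i ∧ X k i ≤ Xmax i) :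
    ∀ k ≤ N, drawdown V k ≤ dmax ∧ 0 < V k :=
  portfolio_drawdown_modulated_feedback_control_general n N Xmin Xmax dmax γ hdmax0 hdmax1 hγ V I X
    hV0 hrec hctrl hX
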